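/- Let v ∈ ℝ³ be a nonzero lightlike vector (q(v) = 0). Then the annihilator Ann(v) = {A ∈ 𝔠𝔬(1,2) : A·v = 0} is a Lie subalgebra of 𝔠𝔬(1,2) of dimension exactly 2. Conversely, if a 2-dimensional Lie subalgebra of 𝔠𝔬(1,2) annihilates a common nonzero vector v ∈ ℝ³, then v is lightlike. -/

import Mathlib

/-!
For `A ∈ 𝔠𝔬(1,2)` with scale `α` (i.e. `AᵀJ + JA = αJ`) and `A v = 0`, the number
`vᵀ(AᵀJ + JA)v = α q(v)` vanishes, so the annihilator of a non-lightlike vector lies in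
`𝔰𝔬(1,2)`. Under the isomorphism `soMat : ℝ³ ≃ 𝔰𝔬(1,2)`, the condition `soMat x *ᵥ v = 0` is the
vanishing of the cross product `v ⨯₃ x`, so the annihilator of `v ≠ 0` in `𝔰𝔬(1,2)` is the line
through `soMat v`; for non-lightlike `v` the whole annihilator is at most 1-dimensional.
For lightlike `v ≠ 0`, the matrix `scalingMat v` kills `v` and has nonzero scale
`2(v₀² + v₂²)`; subtracting a multiple of it brings every element of the annihilator into
`𝔰𝔬(1,2)`, so the annihilator is spanned by `soMat v` and `scalingMat v`.
-/

open Matrix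

attribute [local instance] LieRing.ofAssociativeRing

noncomputable section

/-- The Lorentzian quadratic form `q(x) = 2x₁x₃ + x₂²` on `ℝ³`. -/
def qF (x : Fin 3 → ℝ) : ℝ := 2 * x 0 * x 2 + (x 1) ^ 2

/-- The matrix of `qF`. -/
def Jmat : Matrix (Fin 3) (Fin 3) ℝ := !![0, 0, 1; 0, 1, 0; 1, 0, 0]

/-- The conformal Lie algebra `𝔠𝔬(1,2)`: matrices `A` with `Aᵀ·J + J·A = α·J`. -/
def co12 : Set (Matrix (Fin 3) (Fin 3) ℝ) :=
  {A | ∃ α : ℝ, Aᵀ * Jmat + Jmat * A = α • Jmat}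

namespace Matrix

section Conformal

variable {n R : Type*} [Fintype n] [CommRing R]

theorem scale_mul_dotProduct_mulVec_eq_zero {J A : Matrix n n R} {α : R}
    (hA : Aᵀ * J + J * A = α • J) {v : n → R} (hv : A *ᵥ v = 0) :
    α * (v ⬝ᵥ J *ᵥ v) = 0 := by
  have h := congrArg (fun M => v ⬝ᵥ M *ᵥ v) hA
  simpa [add_mulVec, dotProduct_add, ← mulVec_mulVec, hv, dotProduct_mulVec, vecMul_transpose,
    smul_mulVec, dotProduct_smul] using h.symm

theorem conformal_sub_smul {J A B : Matrix n n R} {α β : R} (hA : Aᵀ * J + J * A = α • J)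
    (hB : Bᵀ * J + J * B = β • J) (c : R) :
    (A - c • B)ᵀ * J + J * (A - c • B) = (α - c * β) • J := by
  rw [sub_smul, mul_smul, ← hA, ← hB, transpose_sub, transpose_smul, sub_mul, mul_sub,
    Matrix.smul_mul, Matrix.mul_smul, smul_add]
  abel

variable [DecidableEq n]

def conformalLieSubalgebra (J : Matrix n n R) : LieSubalgebra R (Matrix n n R) where
  carrier := {A | ∃ α : R, Aᵀ * J + J * A = α • J}
  add_mem' := by
    rintro A B ⟨α, hA⟩ ⟨β, hB⟩
    exact ⟨α + β, by rw [transpose_add, add_mul, mul_add, add_smul, ← hA, ← hB]; abel⟩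
  zero_mem' := ⟨0, by simp⟩
  smul_mem' := by
    rintro c A ⟨α, hA⟩
    exact ⟨c * α, by
      rw [transpose_smul, Matrix.smul_mul, Matrix.mul_smul, ← smul_add, hA, smul_smul]⟩
  lie_mem' := by
    rintro A B ⟨α, hA⟩ ⟨β, hB⟩
    refine ⟨0, ?_⟩
    have hA' : Aᵀ * J = α • J - J * A := eq_sub_of_add_eq hA
    have hB' : Bᵀ * J = β • J - J * B := eq_sub_of_add_eq hB
    calc (A * B - B * A)ᵀ * J + J * (A * B - B * A)
        = Bᵀ * (Aᵀ * J) - Aᵀ * (Bᵀ * J) + J * A * B - J * B * A := by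
          simp only [transpose_sub, transpose_mul, sub_mul, mul_sub, Matrix.mul_assoc]
          abel
      _ = 0 := by
          simp only [mul_sub, sub_mul, Matrix.mul_smul, Matrix.smul_mul, ← Matrix.mul_assoc, hA',
            hB']
          module
      _ = (0 : R) • J := (zero_smul R J).symm

def mulVecAnnihilator (v : n → R) : LieSubalgebra R (Matrix n n R) where
  carrier := {A | A *ᵥ v = 0}
  add_mem' := by
    intro A B (hA : A *ᵥ v = 0) (hB : B *ᵥ v = 0)
    simp [add_mulVec, hA, hB]
  zero_mem' := zero_mulVec v
  smul_mem' := by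
    intro c A (hA : A *ᵥ v = 0)
    simp [smul_mulVec, hA]
  lie_mem' := by
    intro A B (hA : A *ᵥ v = 0) (hB : B *ᵥ v = 0)
    simp [Ring.lie_def, sub_mulVec, ← mulVec_mulVec, hA, hB]

@[simp]
theorem mem_mulVecAnnihilator {v : n → R} {A : Matrix n n R} :
    A ∈ mulVecAnnihilator v ↔ A *ᵥ v = 0 :=
  Iff.rfl

end Conformal

end Matrix

theorem conformal_Jmat_iff {A : Matrix (Fin 3) (Fin 3) ℝ} {α : ℝ} :
    Aᵀ * Jmat + Jmat * A = α • Jmat ↔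
      A 0 2 = 0 ∧ A 2 0 = 0 ∧ A 0 1 + A 1 2 = 0 ∧ A 1 0 + A 2 1 = 0 ∧
        A 0 0 + A 2 2 = α ∧ 2 * A 1 1 = α := by
  simp only [← Matrix.ext_iff, Fin.forall_fin_succ, IsEmpty.forall_iff, Jmat, cons_mul,
    empty_mul, Equiv.symm_apply_apply, Fin.isValue, Matrix.add_apply, Matrix.mul_apply,
    transpose_apply, of_apply, cons_val', cons_val_zero, cons_val_fin_one, Fin.sum_univ_three,
    cons_val_one, cons_val, cons_val_succ, Fin.succ_zero_eq_one, Fin.succ_one_eq_two, vecMul,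
    dotProduct, Matrix.smul_apply, smul_eq_mul, mul_zero, zero_mul, mul_one, one_mul, add_zero,
    zero_add, add_self_eq_zero, and_true]
  constructor
  · rintro ⟨⟨h00, h01, h02⟩, ⟨-, h11, h12⟩, -, -, h22⟩
    refine ⟨?_, ?_, ?_, ?_, ?_, ?_⟩ <;> linarith
  · rintro ⟨h02, h20, h01, h10, h00, h11⟩
    refine ⟨⟨?_, ?_, ?_⟩, ⟨?_, ?_, ?_⟩, ?_, ?_, ?_⟩ <;> linarith

theorem dotProduct_Jmat_mulVec_self (v : Fin 3 → ℝ) : v ⬝ᵥ Jmat *ᵥ v = qF v := by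
  simp [Jmat, qF, dotProduct, mulVec, Fin.sum_univ_three]
  ring

/-- The isomorphism `ℝ³ ≃ 𝔰𝔬(1,2)`, normalised so that `soMat x *ᵥ v` is `v ⨯₃ x` read
backwards. -/
def soMat (x : Fin 3 → ℝ) : Matrix (Fin 3) (Fin 3) ℝ :=
  !![x 1, -x 0, 0; -x 2, 0, x 0; 0, x 2, -x 1]

theorem soMat_conformal (x : Fin 3 → ℝ) :
    (soMat x)ᵀ * Jmat + Jmat * soMat x = (0 : ℝ) • Jmat := by
  rw [conformal_Jmat_iff]
  simp [soMat]

theorem soMat_smul (c : ℝ) (x : Fin 3 → ℝ) : soMat (c • x) = c • soMat x := by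
  ext i j
  fin_cases i <;> fin_cases j <;> simp [soMat]

theorem soMat_ne_zero {x : Fin 3 → ℝ} (hx : x ≠ 0) : soMat x ≠ 0 := by
  contrapose! hx
  have h : ∀ i j, soMat x i j = 0 := by simp [hx]
  ext i
  fin_cases i
  · simpa [soMat] using h 0 1
  · simpa [soMat] using h 0 0
  · simpa [soMat] using h 1 0

theorem soMat_mulVec_eq_zero_iff (x v : Fin 3 → ℝ) : soMat x *ᵥ v = 0 ↔ v ⨯₃ x = 0 := by
  simp only [soMat, cons_mulVec, empty_mulVec, dotProduct, Fin.sum_univ_three, cross_apply,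
    ← List.ofFn_inj, List.ofFn_succ, List.ofFn_zero, List.cons.injEq, cons_val_zero, cons_val_one,
    cons_val, cons_val_succ, cons_val_fin_one, Pi.zero_apply, neg_mul, zero_mul, add_zero,
    zero_add, and_true]
  constructor <;> rintro ⟨h0, h1, h2⟩ <;> refine ⟨?_, ?_, ?_⟩ <;> linarith

theorem eq_soMat_of_conformal_zero {A : Matrix (Fin 3) (Fin 3) ℝ}
    (hA : Aᵀ * Jmat + Jmat * A = (0 : ℝ) • Jmat) : A = soMat ![A 1 2, -A 2 2, A 2 1] := by
  obtain ⟨h02, h20, h01, h10, h00, h11⟩ := conformal_Jmat_iff.1 hA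
  ext i j
  fin_cases i <;> fin_cases j <;> simp [soMat] <;> linarith

theorem mem_span_soMat_of_conformal_zero {v : Fin 3 → ℝ} (hv : v ≠ 0)
    {A : Matrix (Fin 3) (Fin 3) ℝ} (hA : Aᵀ * Jmat + Jmat * A = (0 : ℝ) • Jmat)
    (hAv : A *ᵥ v = 0) : A ∈ ℝ ∙ soMat v := by
  set x : Fin 3 → ℝ := ![A 1 2, -A 2 2, A 2 1]
  have hAx : A = soMat x := eq_soMat_of_conformal_zero hA
  rw [hAx, soMat_mulVec_eq_zero_iff] at hAv
  obtain ⟨c, hc⟩ : ∃ c : ℝ, c • v = x := by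
    by_contra! h
    exact crossProduct_ne_zero_iff_linearIndependent.2 ((LinearIndependent.pair_iff' hv).2 h) hAv
  exact Submodule.mem_span_singleton.2 ⟨c, by rw [hAx, ← hc, soMat_smul]⟩

def scalingMat (v : Fin 3 → ℝ) : Matrix (Fin 3) (Fin 3) ℝ :=
  !![2 * v 2 ^ 2, v 1 * v 2, 0;
    -(v 0 * v 1), v 0 ^ 2 + v 2 ^ 2, -(v 1 * v 2);
    0, v 0 * v 1, 2 * v 0 ^ 2]

theorem scalingMat_conformal (v : Fin 3 → ℝ) :
    (scalingMat v)ᵀ * Jmat + Jmat * scalingMat v = (2 * (v 0 ^ 2 + v 2 ^ 2)) • Jmat := by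
  rw [conformal_Jmat_iff]
  simp [scalingMat]
  ring

theorem scalingMat_mulVec_self (v : Fin 3 → ℝ) : scalingMat v *ᵥ v = qF v • ![v 2, 0, v 0] := by
  ext i
  fin_cases i <;> simp [scalingMat, qF, mulVec, dotProduct, Fin.sum_univ_three] <;> ring

theorem soMat_mulVec_self (v : Fin 3 → ℝ) : soMat v *ᵥ v = 0 := by
  rw [soMat_mulVec_eq_zero_iff, cross_self]

theorem sq_add_sq_ne_zero_of_qF_eq_zero {v : Fin 3 → ℝ} (hv : v ≠ 0) (hq : qF v = 0) :
    v 0 ^ 2 + v 2 ^ 2 ≠ 0 := by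
  contrapose! hv
  have h0 : v 0 = 0 := by nlinarith [sq_nonneg (v 0), sq_nonneg (v 2)]
  have h2 : v 2 = 0 := by nlinarith [sq_nonneg (v 0), sq_nonneg (v 2)]
  have h1 : v 1 = 0 := by simpa [qF, h0] using hq
  ext i
  fin_cases i <;> assumption

theorem linearIndependent_soMat_scalingMat {v : Fin 3 → ℝ} (hv : v ≠ 0) (hq : qF v = 0) :
    LinearIndependent ℝ ![soMat v, scalingMat v] := by
  refine (LinearIndependent.pair_iff' (soMat_ne_zero hv)).2 fun c h => ?_
  have h11 : 0 = v 0 ^ 2 + v 2 ^ 2 := by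
    simpa [soMat, scalingMat] using congrFun (congrFun h 1) 1
  exact sq_add_sq_ne_zero_of_qF_eq_zero hv hq h11.symm

theorem toSubmodule_conformal_inf_mulVecAnnihilator {v : Fin 3 → ℝ} (hv : v ≠ 0)
    (hq : qF v = 0) :
    (conformalLieSubalgebra Jmat ⊓ mulVecAnnihilator v).toSubmodule =
      Submodule.span ℝ (Set.range ![soMat v, scalingMat v]) := by
  apply le_antisymm
  · rintro A ⟨⟨α, hA⟩, hAv : A *ᵥ v = 0⟩
    have hβ : 2 * (v 0 ^ 2 + v 2 ^ 2) ≠ 0 :=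
      mul_ne_zero two_ne_zero (sq_add_sq_ne_zero_of_qF_eq_zero hv hq)
    set c := α / (2 * (v 0 ^ 2 + v 2 ^ 2)) with hc_def
    have hc : α - c * (2 * (v 0 ^ 2 + v 2 ^ 2)) = 0 := by
      rw [hc_def, div_mul_cancel₀ α hβ, sub_self]
    have hB : A - c • scalingMat v ∈ ℝ ∙ soMat v := by
      refine mem_span_soMat_of_conformal_zero hv ?_ ?_
      · rw [← hc]
        exact conformal_sub_smul hA (scalingMat_conformal v) c
      · rw [sub_mulVec, smul_mulVec, hAv, scalingMat_mulVec_self, hq]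
        simp
    obtain ⟨d, hd⟩ := Submodule.mem_span_singleton.1 hB
    rw [range_cons_cons_empty, Submodule.mem_span_pair]
    exact ⟨d, c, by rw [hd]; abel⟩
  · rw [Submodule.span_le]
    rintro _ ⟨i, rfl⟩
    fin_cases i
    · exact ⟨⟨0, soMat_conformal v⟩, soMat_mulVec_self v⟩
    · exact ⟨⟨_, scalingMat_conformal v⟩, by simp [scalingMat_mulVec_self, hq]⟩

theorem finrank_conformal_inf_mulVecAnnihilator {v : Fin 3 → ℝ} (hv : v ≠ 0) (hq : qF v = 0) :
    Module.finrank ℝ ↥(conformalLieSubalgebra Jmat ⊓ mulVecAnnihilator v :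
      LieSubalgebra ℝ (Matrix (Fin 3) (Fin 3) ℝ)) = 2 := by
  change Module.finrank ℝ (conformalLieSubalgebra Jmat ⊓ mulVecAnnihilator v).toSubmodule = 2
  rw [toSubmodule_conformal_inf_mulVecAnnihilator hv hq,
    finrank_span_eq_card (linearIndependent_soMat_scalingMat hv hq), Fintype.card_fin]

theorem mem_span_soMat_of_qF_ne_zero {w : Fin 3 → ℝ} (hq : qF w ≠ 0)
    {A : Matrix (Fin 3) (Fin 3) ℝ} (hA : A ∈ co12) (hAw : A *ᵥ w = 0) : A ∈ ℝ ∙ soMat w := by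
  obtain ⟨α, hα⟩ := hA
  have hα0 : α = 0 := by
    have h := scale_mul_dotProduct_mulVec_eq_zero hα hAw
    rw [dotProduct_Jmat_mulVec_self] at h
    exact (mul_eq_zero.1 h).resolve_right hq
  subst hα0
  exact mem_span_soMat_of_conformal_zero (by rintro rfl; simp [qF] at hq) hα hAw

theorem stmt9 (v : Fin 3 → ℝ) (hv : v ≠ 0) (hlight : qF v = 0) :
    -- the annihilator of `v` in `𝔠𝔬(1,2)` is a Lie subalgebra of dimension 2
    (∃ L : LieSubalgebra ℝ (Matrix (Fin 3) (Fin 3) ℝ),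
      (L : Set (Matrix (Fin 3) (Fin 3) ℝ)) = {A ∈ co12 | A.mulVec v = 0} ∧
      Module.finrank ℝ L = 2) ∧
    -- conversely, a common nonzero annihilated vector of a 2-dimensional
    -- Lie subalgebra of `𝔠𝔬(1,2)` is lightlike
    (∀ L : LieSubalgebra ℝ (Matrix (Fin 3) (Fin 3) ℝ),
      (L : Set (Matrix (Fin 3) (Fin 3) ℝ)) ⊆ co12 →
      Module.finrank ℝ L = 2 →
      ∀ w : Fin 3 → ℝ, w ≠ 0 → (∀ A ∈ L, A.mulVec w = 0) → qF w = 0) := by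
  refine ⟨⟨conformalLieSubalgebra Jmat ⊓ mulVecAnnihilator v, rfl,
    finrank_conformal_inf_mulVecAnnihilator hv hlight⟩, ?_⟩
  intro L hL hrank w hw hann
  by_contra hq
  have hle : L.toSubmodule ≤ ℝ ∙ soMat w := fun A hA =>
    mem_span_soMat_of_qF_ne_zero hq (hL hA) (hann A hA)
  have := (Submodule.finrank_mono hle).trans (finrank_span_singleton (soMat_ne_zero hw)).le
  change Module.finrank ℝ L.toSubmodule = 2 at hrank
  omega
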